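/- Fix ℓ > 0, r_h > 0 and δ > 0. Suppose (m, S, α, ω) is a solution of the EYM field equations on (r_h, r_h + δ) with μ(r) > 0 and S(r) > 0 there, such that m, S, α, ω extend to C¹ functions on [r_h, r_h + δ) with μ(r_h) = 0, μ'(r_h) ≠ 0, S(r_h) = S_h > 0, α(r_h) = 0, α'(r_h) = α'_h and ω(r_h) = ω_h. Then m(r_h) = r_h/2 + r_h³/(2ℓ²), m'(r_h) = r_h²α'_h²/(2S_h²) + (ω_h² − 1)²/(2r_h²), and μ'(r_h) = (1/r_h)(1 + 3 r_h²/ℓ²) − r_h α'_h²/S_h² − (ω_h² − 1)²/r_h³. -/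

import Mathlib

/-!
At the horizon `μ` vanishes, which fixes `m(r_h)`. Letting `r ↓ r_h` in the mass equation gives
`m'(r_h)`: `m'` is continuous up to `r_h`, and the only singular term `α²ω²/(μS²)` tends to zero,
because `α` and `μ` both vanish at `r_h` with `μ'(r_h) ≠ 0`, so `α²/μ ≈ (α'_h²/μ'(r_h)) (r - r_h)`.
Differentiating `μ = 1 - 2m/r + r²/ℓ²` at `r_h` then gives `μ'(r_h)`.
-/

noncomputable section

open Set Filter

/-- The metric function `μ(r) = 1 - 2 m(r)/r + r²/ℓ²`. -/
def metricMu (ℓ : ℝ) (m : ℝ → ℝ) (r : ℝ) : ℝ :=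
  1 - 2 * m r / r + r ^ 2 / ℓ ^ 2

/-- `(m, S, a, w)` is a solution of the su(2) Einstein–Yang–Mills field equations
(with electric gauge field function `a = α` and magnetic gauge field function `w = ω`)
on the interval `I ⊆ (0, ∞)`. -/
structure IsEYMSolution (ℓ : ℝ) (I : Set ℝ) (m S a w : ℝ → ℝ) : Prop where
  subset_Ioi : I ⊆ Set.Ioi (0 : ℝ)
  ordConnected : I.OrdConnected
  m_C1 : ContDiffOn ℝ 1 m I
  S_C1 : ContDiffOn ℝ 1 S I
  a_C2 : ContDiffOn ℝ 2 a I
  w_C2 : ContDiffOn ℝ 2 w I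
  S_ne_zero : ∀ r ∈ I, S r ≠ 0
  mu_ne_zero : ∀ r ∈ I, metricMu ℓ m r ≠ 0
  eq_m : ∀ r ∈ I, deriv m r =
      r ^ 2 * (deriv a r) ^ 2 / (2 * S r ^ 2)
        + a r ^ 2 * w r ^ 2 / (metricMu ℓ m r * S r ^ 2)
        + metricMu ℓ m r * (deriv w r) ^ 2
        + (w r ^ 2 - 1) ^ 2 / (2 * r ^ 2)
  eq_S : ∀ r ∈ I, deriv S r =
      S r * (2 * a r ^ 2 * w r ^ 2 / (r * metricMu ℓ m r ^ 2 * S r ^ 2)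
        + 2 * (deriv w r) ^ 2 / r)
  eq_a : ∀ r ∈ I, deriv (deriv a) r =
      -2 * deriv a r / r + deriv a r * deriv S r / S r
        + 2 * a r * w r ^ 2 / (r ^ 2 * metricMu ℓ m r)
  eq_w : ∀ r ∈ I, deriv (deriv w) r =
      -(deriv w r) * deriv S r / S r
        - deriv w r * deriv (metricMu ℓ m) r / metricMu ℓ m r
        - a r ^ 2 * w r / (metricMu ℓ m r ^ 2 * S r ^ 2)
        + w r * (w r ^ 2 - 1) / (r ^ 2 * metricMu ℓ m r)

open scoped Topology

theorem mass_eq_of_metricMu_eq_zero {ℓ r : ℝ} {m : ℝ → ℝ} (hr : r ≠ 0)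
    (h : metricMu ℓ m r = 0) : m r = r / 2 + r ^ 3 / (2 * ℓ ^ 2) := by
  have hm : m r = r / 2 * (1 + r ^ 2 / ℓ ^ 2 - metricMu ℓ m r) := by
    unfold metricMu
    field_simp
    ring
  rw [hm, h]
  ring

theorem HasDerivWithinAt.metricMu {m : ℝ → ℝ} {m' r : ℝ} {s : Set ℝ}
    (hm : HasDerivWithinAt m m' s r) (hr : r ≠ 0) (ℓ : ℝ) :
    HasDerivWithinAt (metricMu ℓ m) (2 * m r / r ^ 2 - 2 * m' / r + 2 * r / ℓ ^ 2) s r := by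
  have h : HasDerivWithinAt (fun x => 1 - 2 * m x / x + x ^ 2 / ℓ ^ 2)
      (0 - (2 * m' * r - 2 * m r * 1) / r ^ 2 + 2 * r / ℓ ^ 2) s r :=
    ((hasDerivWithinAt_const r s 1).sub ((hm.const_mul 2).div (hasDerivWithinAt_id r s) hr)).add
      (((hasDerivWithinAt_id r s).pow 2).div_const (ℓ ^ 2) |>.congr_deriv (by simp))
  exact h.congr_deriv (by field_simp; ring)

theorem tendsto_deriv_nhdsGT_of_contDiffOn_Ico {E : Type*} [NormedAddCommGroup E]
    [NormedSpace ℝ E] {f : ℝ → E} {a b : ℝ} (hab : a < b) (hf : ContDiffOn ℝ 1 f (Ico a b)) :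
    Tendsto (deriv f) (𝓝[>] a) (𝓝 (derivWithin f (Ico a b) a)) := by
  have hc := (hf.continuousOn_derivWithin (uniqueDiffOn_Ico a b) le_rfl a
    (left_mem_Ico.2 hab)).mono_of_mem_nhdsWithin (Ico_mem_nhdsGT hab)
  refine hc.tendsto.congr' ?_
  filter_upwards [Ioo_mem_nhdsGT hab] with r hr
  exact derivWithin_of_mem_nhds (Ico_mem_nhds hr.1 hr.2)

theorem tendsto_div_nhdsGT_of_hasDerivWithinAt {f g : ℝ → ℝ} {f' g' x : ℝ}
    (hf : HasDerivWithinAt f f' (Ioi x) x) (hg : HasDerivWithinAt g g' (Ioi x) x)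
    (hfx : f x = 0) (hgx : g x = 0) (hg' : g' ≠ 0) :
    Tendsto (fun r => f r / g r) (𝓝[>] x) (𝓝 (f' / g')) := by
  have hslope : Tendsto (fun r => slope f x r / slope g x r) (𝓝[>] x) (𝓝 (f' / g')) :=
    ((hasDerivWithinAt_iff_tendsto_slope' self_notMem_Ioi).mp hf).div
      ((hasDerivWithinAt_iff_tendsto_slope' self_notMem_Ioi).mp hg) hg'
  refine hslope.congr' (eventually_nhdsWithin_of_forall fun r hr => ?_)
  have hinv : (r - x)⁻¹ ≠ 0 := inv_ne_zero (sub_ne_zero.mpr (ne_of_gt hr))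
  simp only [slope, vsub_eq_sub, smul_eq_mul, hfx, hgx, sub_zero, mul_div_mul_left _ _ hinv]

theorem tendsto_sq_div_nhdsGT_of_hasDerivWithinAt {f g : ℝ → ℝ} {f' g' x : ℝ}
    (hf : HasDerivWithinAt f f' (Ioi x) x) (hg : HasDerivWithinAt g g' (Ioi x) x)
    (hfx : f x = 0) (hgx : g x = 0) (hg' : g' ≠ 0) :
    Tendsto (fun r => f r ^ 2 / g r) (𝓝[>] x) (𝓝 0) := by
  have hf0 : Tendsto f (𝓝[>] x) (𝓝 0) := hfx ▸ hf.continuousWithinAt.tendsto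
  simpa only [zero_mul, sq, mul_div_assoc] using
    hf0.mul (tendsto_div_nhdsGT_of_hasDerivWithinAt hf hg hfx hgx hg')

theorem IsEYMSolution.tendsto_deriv_mass {ℓ rh δ Sh ah' wh wh' : ℝ} {m S a w : ℝ → ℝ}
    (hsol : IsEYMSolution ℓ (Ioo rh (rh + δ)) m S a w) (hδ : 0 < δ) (hrh : rh ≠ 0)
    (hS : Tendsto S (𝓝[>] rh) (𝓝 Sh)) (hSh : Sh ≠ 0)
    (ha' : Tendsto (deriv a) (𝓝[>] rh) (𝓝 ah'))
    (haμ : Tendsto (fun r => a r ^ 2 / metricMu ℓ m r) (𝓝[>] rh) (𝓝 0))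
    (hw : Tendsto w (𝓝[>] rh) (𝓝 wh)) (hw' : Tendsto (deriv w) (𝓝[>] rh) (𝓝 wh'))
    (hμ : Tendsto (metricMu ℓ m) (𝓝[>] rh) (𝓝 0)) :
    Tendsto (deriv m) (𝓝[>] rh)
      (𝓝 (rh ^ 2 * ah' ^ 2 / (2 * Sh ^ 2) + (wh ^ 2 - 1) ^ 2 / (2 * rh ^ 2))) := by
  have hid : Tendsto (fun r : ℝ => r) (𝓝[>] rh) (𝓝 rh) :=
    tendsto_nhdsWithin_of_tendsto_nhds tendsto_id
  have hlim : Tendsto (fun r => r ^ 2 * deriv a r ^ 2 / (2 * S r ^ 2)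
      + a r ^ 2 / metricMu ℓ m r * (w r ^ 2 / S r ^ 2) + metricMu ℓ m r * deriv w r ^ 2
      + (w r ^ 2 - 1) ^ 2 / (2 * r ^ 2)) (𝓝[>] rh)
      (𝓝 (rh ^ 2 * ah' ^ 2 / (2 * Sh ^ 2) + 0 * (wh ^ 2 / Sh ^ 2) + 0 * wh' ^ 2
        + (wh ^ 2 - 1) ^ 2 / (2 * rh ^ 2))) :=
    ((((hid.pow 2).mul (ha'.pow 2)).div (tendsto_const_nhds.mul (hS.pow 2)) (by positivity)).add
      (haμ.mul ((hw.pow 2).div (hS.pow 2) (by positivity)))).add (hμ.mul (hw'.pow 2)) |>.add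
      ((((hw.pow 2).sub tendsto_const_nhds).pow 2).div (tendsto_const_nhds.mul (hid.pow 2))
        (by positivity))
  simp only [zero_mul, add_zero] at hlim
  refine hlim.congr' ?_
  filter_upwards [Ioo_mem_nhdsGT (by linarith : rh < rh + δ)] with r hr
  rw [hsol.eq_m r hr]
  ring

theorem eym_horizon_data_formulae_general (ℓ rh δ Sh ah' wh : ℝ) (hrh : 0 < rh)
    (hδ : 0 < δ) (m S a w : ℝ → ℝ)
    (hsol : IsEYMSolution ℓ (Set.Ioo rh (rh + δ)) m S a w)
    (hm : ContDiffOn ℝ 1 m (Set.Ico rh (rh + δ)))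
    (hS : ContDiffOn ℝ 1 S (Set.Ico rh (rh + δ)))
    (ha : ContDiffOn ℝ 1 a (Set.Ico rh (rh + δ)))
    (hw : ContDiffOn ℝ 1 w (Set.Ico rh (rh + δ)))
    (hμh : metricMu ℓ m rh = 0)
    (hμ'h : derivWithin (metricMu ℓ m) (Set.Ico rh (rh + δ)) rh ≠ 0)
    (hSh : S rh = Sh) (hShpos : 0 < Sh)
    (hah : a rh = 0) (hah' : derivWithin a (Set.Ico rh (rh + δ)) rh = ah')
    (hwh : w rh = wh) :
    m rh = rh / 2 + rh ^ 3 / (2 * ℓ ^ 2) ∧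
    derivWithin m (Set.Ico rh (rh + δ)) rh =
      rh ^ 2 * ah' ^ 2 / (2 * Sh ^ 2) + (wh ^ 2 - 1) ^ 2 / (2 * rh ^ 2) ∧
    derivWithin (metricMu ℓ m) (Set.Ico rh (rh + δ)) rh =
      (1 / rh) * (1 + 3 * rh ^ 2 / ℓ ^ 2) - rh * ah' ^ 2 / Sh ^ 2
        - (wh ^ 2 - 1) ^ 2 / rh ^ 3 := by
  have hlt : rh < rh + δ := by linarith
  have hmem : rh ∈ Ico rh (rh + δ) := left_mem_Ico.2 hlt
  have hGT : Ico rh (rh + δ) ∈ 𝓝[>] rh := Ico_mem_nhdsGT hlt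
  have hμD := ((hm.differentiableOn one_ne_zero) rh hmem).hasDerivWithinAt.metricMu hrh.ne' ℓ
  have hμ' := hμD.derivWithin (uniqueDiffOn_Ico rh (rh + δ) rh hmem)
  have haD := hah' ▸ ((ha.differentiableOn one_ne_zero) rh hmem).hasDerivWithinAt
  have hmass := mass_eq_of_metricMu_eq_zero hrh.ne' hμh
  have hm' : derivWithin m (Ico rh (rh + δ)) rh =
      rh ^ 2 * ah' ^ 2 / (2 * Sh ^ 2) + (wh ^ 2 - 1) ^ 2 / (2 * rh ^ 2) := by
    refine tendsto_nhds_unique (tendsto_deriv_nhdsGT_of_contDiffOn_Ico hlt hm) ?_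
    refine hsol.tendsto_deriv_mass hδ hrh.ne'
      (hSh ▸ ((hS.continuousOn rh hmem).mono_of_mem_nhdsWithin hGT).tendsto) hShpos.ne'
      (hah' ▸ tendsto_deriv_nhdsGT_of_contDiffOn_Ico hlt ha)
      (tendsto_sq_div_nhdsGT_of_hasDerivWithinAt (haD.mono_of_mem_nhdsWithin hGT)
        (hμD.mono_of_mem_nhdsWithin hGT) hah hμh (hμ' ▸ hμ'h))
      (hwh ▸ ((hw.continuousOn rh hmem).mono_of_mem_nhdsWithin hGT).tendsto)
      (tendsto_deriv_nhdsGT_of_contDiffOn_Ico hlt hw)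
      (hμh ▸ (hμD.continuousWithinAt.mono_of_mem_nhdsWithin hGT).tendsto)
  refine ⟨hmass, hm', ?_⟩
  rw [hμ', hm', hmass]
  field_simp
  ring

/-- **Horizon data formulae.**
If `(m, S, α, ω)` solves the EYM field equations on `(r_h, r_h + δ)` with `μ, S > 0`
there, and `m, S, α, ω` extend `C¹`-ly to `[r_h, r_h + δ)` with `μ(r_h) = 0`,
`μ'(r_h) ≠ 0`, `S(r_h) = S_h > 0`, `α(r_h) = 0`, `α'(r_h) = α'_h`, `ω(r_h) = ω_h`, then
`m(r_h) = r_h/2 + r_h³/(2ℓ²)`,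
`m'(r_h) = r_h²α'_h²/(2S_h²) + (ω_h² − 1)²/(2r_h²)` and
`μ'(r_h) = (1/r_h)(1 + 3r_h²/ℓ²) − r_h α'_h²/S_h² − (ω_h² − 1)²/r_h³`. -/
theorem eym_horizon_data_formulae (ℓ rh δ Sh ah' wh : ℝ) (hℓ : 0 < ℓ) (hrh : 0 < rh)
    (hδ : 0 < δ) (m S a w : ℝ → ℝ)
    (hsol : IsEYMSolution ℓ (Set.Ioo rh (rh + δ)) m S a w)
    (hμpos : ∀ r ∈ Set.Ioo rh (rh + δ), 0 < metricMu ℓ m r)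
    (hSpos : ∀ r ∈ Set.Ioo rh (rh + δ), 0 < S r)
    (hm : ContDiffOn ℝ 1 m (Set.Ico rh (rh + δ)))
    (hS : ContDiffOn ℝ 1 S (Set.Ico rh (rh + δ)))
    (ha : ContDiffOn ℝ 1 a (Set.Ico rh (rh + δ)))
    (hw : ContDiffOn ℝ 1 w (Set.Ico rh (rh + δ)))
    (hμh : metricMu ℓ m rh = 0)
    (hμ'h : derivWithin (metricMu ℓ m) (Set.Ico rh (rh + δ)) rh ≠ 0)
    (hSh : S rh = Sh) (hShpos : 0 < Sh)
    (hah : a rh = 0) (hah' : derivWithin a (Set.Ico rh (rh + δ)) rh = ah')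
    (hwh : w rh = wh) :
    m rh = rh / 2 + rh ^ 3 / (2 * ℓ ^ 2) ∧
    derivWithin m (Set.Ico rh (rh + δ)) rh =
      rh ^ 2 * ah' ^ 2 / (2 * Sh ^ 2) + (wh ^ 2 - 1) ^ 2 / (2 * rh ^ 2) ∧
    derivWithin (metricMu ℓ m) (Set.Ico rh (rh + δ)) rh =
      (1 / rh) * (1 + 3 * rh ^ 2 / ℓ ^ 2) - rh * ah' ^ 2 / Sh ^ 2
        - (wh ^ 2 - 1) ^ 2 / rh ^ 3 :=
  eym_horizon_data_formulae_general ℓ rh δ Sh ah' wh hrh hδ m S a w hsol hm hS ha hw hμh hμ'h hSh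
    hShpos hah hah' hwh
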